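/- Let (S, A, P, r, γ) be a finite Markov decision process with discount factor γ ∈ [0,1), let π and π' be stationary policies, with π(·|s) absolutely continuous with respect to π'(·|s) for every state s, and let Q̂ : S × A → ℝ satisfy |Q̂(s,a) − Q^π(s,a)| ≤ ε_Q for all (s,a), where ε_Q ≥ 0. Let β > 0, and for each state s define L_s(μ) = E_{a∼μ}[Q̂(s,a)] − β·KL(π(·|s) ‖ μ) for probability distributions μ on A. Fix a state s and δ_s ≥ 0, and suppose L_s(π'(·|s)) ≥ sup_μ L_s(μ) − δ_s. Then the expected advantage satisfies E_{a∼π'(·|s)}[A^π(s,a)] ≥ β·KL(π(·|s) ‖ π'(·|s)) − δ_s − 2ε_Q. -/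

import Mathlib

open scoped BigOperators

/-- A finite Markov decision process over state space `S` and action space `A`. -/
structure MDP (S A : Type) [Fintype S] [Fintype A] where
  /-- transition kernel: `P s a s'` is the probability of moving to `s'` from `s` under action `a` -/
  P : S → A → S → ℝ
  P_nonneg : ∀ s a s', 0 ≤ P s a s'
  P_sum_one : ∀ s a, ∑ s', P s a s' = 1
  /-- reward function -/
  r : S → A → ℝ
  /-- discount factor -/
  γ : ℝ
  γ_nonneg : 0 ≤ γ
  γ_lt_one : γ < 1

variable {S A : Type} [Fintype S] [Fintype A] [DecidableEq S]

/-- `p` is a probability distribution on a finite set. -/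
def IsProb {A : Type} [Fintype A] (p : A → ℝ) : Prop :=
  (∀ a, 0 ≤ p a) ∧ ∑ a, p a = 1

/-- A stationary policy assigns a probability distribution over actions to each state. -/
def IsPolicy (π : S → A → ℝ) : Prop :=
  ∀ s, IsProb (π s)

/-- Distribution of the state at time `t`, starting at `s₀` and following policy `π`. -/
noncomputable def stateDist (M : MDP S A) (π : S → A → ℝ) (s₀ : S) : ℕ → S → ℝ
  | 0, s => if s = s₀ then 1 else 0
  | t + 1, s' => ∑ s, ∑ a, stateDist M π s₀ t s * π s a * M.P s a s'

/-- Value function: expected discounted return of policy `π` started from `s₀`. -/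
noncomputable def V (M : MDP S A) (π : S → A → ℝ) (s₀ : S) : ℝ :=
  ∑' t : ℕ, M.γ ^ t * ∑ s, stateDist M π s₀ t s * ∑ a, π s a * M.r s a

/-- State-action value function of policy `π`. -/
noncomputable def Q (M : MDP S A) (π : S → A → ℝ) (s : S) (a : A) : ℝ :=
  M.r s a + M.γ * ∑ s', M.P s a s' * V M π s'

/-- Advantage function of policy `π`. -/
noncomputable def Adv (M : MDP S A) (π : S → A → ℝ) (s : S) (a : A) : ℝ :=
  Q M π s a - V M π s

/-- Discounted state visitation distribution of policy `π` started from `s₀`. -/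
noncomputable def dvisit (M : MDP S A) (π : S → A → ℝ) (s₀ : S) (s : S) : ℝ :=
  (1 - M.γ) * ∑' t : ℕ, M.γ ^ t * stateDist M π s₀ t s

/-- Kullback–Leibler divergence between distributions on a finite set. -/
noncomputable def KL {A : Type} [Fintype A] (p q : A → ℝ) : ℝ :=
  ∑ a, p a * Real.log (p a / q a)

/-- `p` is absolutely continuous with respect to `q`. -/
def AbsCont {A : Type} [Fintype A] (p q : A → ℝ) : Prop :=
  ∀ a, q a = 0 → p a = 0

lemma stateDist_nonneg (M : MDP S A) {π : S → A → ℝ} (hπ : IsPolicy π) (s₀ : S) :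
    ∀ t s, 0 ≤ stateDist M π s₀ t s := by
  intro t
  induction t with
  | zero => intro s; unfold stateDist; split <;> norm_num
  | succ t ih =>
    intro s'
    unfold stateDist
    refine Finset.sum_nonneg fun s _ => Finset.sum_nonneg fun a _ => ?_
    exact mul_nonneg (mul_nonneg (ih s) ((hπ s).1 a)) (M.P_nonneg s a s')

lemma stateDist_sum_one (M : MDP S A) {π : S → A → ℝ} (hπ : IsPolicy π) (s₀ : S) :
    ∀ t, ∑ s, stateDist M π s₀ t s = 1 := by
  intro t
  induction t with
  | zero => simp [stateDist]
  | succ t ih =>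
    show ∑ s', ∑ s, ∑ a, stateDist M π s₀ t s * π s a * M.P s a s' = 1
    rw [Finset.sum_comm]
    calc ∑ s, ∑ s', ∑ a, stateDist M π s₀ t s * π s a * M.P s a s'
        = ∑ s, stateDist M π s₀ t s * (∑ a, π s a * ∑ s', M.P s a s') := by
          refine Finset.sum_congr rfl fun s _ => ?_
          rw [Finset.sum_comm]
          simp [Finset.mul_sum, mul_assoc]
      _ = 1 := by
          simp only [M.P_sum_one, mul_one, (hπ _).2, mul_one]
          exact ih

lemma stateDist_le_one (M : MDP S A) {π : S → A → ℝ} (hπ : IsPolicy π) (s₀ : S)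
    (t : ℕ) (s : S) : stateDist M π s₀ t s ≤ 1 := by
  calc stateDist M π s₀ t s ≤ ∑ s', stateDist M π s₀ t s' :=
        Finset.single_le_sum (fun s' _ => stateDist_nonneg M hπ s₀ t s') (Finset.mem_univ s)
    _ = 1 := stateDist_sum_one M hπ s₀ t

lemma summable_V (M : MDP S A) {π : S → A → ℝ} (hπ : IsPolicy π) (s₀ : S) :
    Summable (fun t => M.γ ^ t * ∑ s, stateDist M π s₀ t s * ∑ a, π s a * M.r s a) := by
  set C := ∑ s : S, |∑ a, π s a * M.r s a| with hC
  refine Summable.of_norm_bounded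
    ((summable_geometric_of_lt_one M.γ_nonneg M.γ_lt_one).mul_left C) fun t => ?_
  rw [Real.norm_eq_abs, abs_mul, abs_pow, abs_of_nonneg M.γ_nonneg, mul_comm]
  refine mul_le_mul_of_nonneg_right ?_ (pow_nonneg M.γ_nonneg t)
  calc |∑ s, stateDist M π s₀ t s * ∑ a, π s a * M.r s a|
      ≤ ∑ s, |stateDist M π s₀ t s * ∑ a, π s a * M.r s a| := Finset.abs_sum_le_sum_abs _ _
    _ ≤ C := by
        rw [hC]
        refine Finset.sum_le_sum fun s _ => ?_
        rw [abs_mul, abs_of_nonneg (stateDist_nonneg M hπ s₀ t s)]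
        exact mul_le_of_le_one_left (abs_nonneg _) (stateDist_le_one M hπ s₀ t s)


lemma sum_comm3 {α β γ : Type} [Fintype α] [Fintype β] [Fintype γ] (f : α → β → γ → ℝ) :
    ∑ a, ∑ b, ∑ c, f a b c = ∑ b, ∑ c, ∑ a, f a b c :=
  calc ∑ a, ∑ b, ∑ c, f a b c = ∑ b, ∑ a, ∑ c, f a b c := Finset.sum_comm
    _ = ∑ b, ∑ c, ∑ a, f a b c := Finset.sum_congr rfl fun _ _ => Finset.sum_comm

lemma sum_comm4 {α β γ δ : Type} [Fintype α] [Fintype β] [Fintype γ] [Fintype δ]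
    (f : α → β → γ → δ → ℝ) :
    ∑ a, ∑ b, ∑ c, ∑ d, f a b c d = ∑ c, ∑ d, ∑ a, ∑ b, f a b c d :=
  calc ∑ a, ∑ b, ∑ c, ∑ d, f a b c d
      = ∑ a, ∑ c, ∑ d, ∑ b, f a b c d := Finset.sum_congr rfl fun a _ => sum_comm3 _
    _ = ∑ c, ∑ d, ∑ a, ∑ b, f a b c d := sum_comm3 _

lemma stateDist_succ (M : MDP S A) (π : S → A → ℝ) (s₀ : S) :
    ∀ t s, stateDist M π s₀ (t + 1) s
      = ∑ a, ∑ s1, π s₀ a * M.P s₀ a s1 * stateDist M π s1 t s := by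
  intro t
  induction t with
  | zero =>
    intro s
    show ∑ s', ∑ a, stateDist M π s₀ 0 s' * π s' a * M.P s' a s = _
    simp only [stateDist]
    rw [Finset.sum_comm]
    refine Finset.sum_congr rfl fun a _ => ?_
    simp [Finset.sum_ite_eq', mul_comm]
  | succ t ih =>
    intro s'
    show ∑ s, ∑ a, stateDist M π s₀ (t + 1) s * π s a * M.P s a s' = _
    calc ∑ s, ∑ a, stateDist M π s₀ (t + 1) s * π s a * M.P s a s'
        = ∑ s, ∑ a, ∑ b, ∑ s1,
            π s₀ b * M.P s₀ b s1 * stateDist M π s1 t s * π s a * M.P s a s' := by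
          simp only [ih, Finset.sum_mul]
      _ = ∑ b, ∑ s1, ∑ s, ∑ a,
            π s₀ b * M.P s₀ b s1 * stateDist M π s1 t s * π s a * M.P s a s' := sum_comm4 _
      _ = ∑ b, ∑ s1, π s₀ b * M.P s₀ b s1 *
            ∑ s, ∑ a, stateDist M π s1 t s * π s a * M.P s a s' := by
          refine Finset.sum_congr rfl fun b _ => Finset.sum_congr rfl fun s1 _ => ?_
          rw [Finset.mul_sum]
          refine Finset.sum_congr rfl fun s _ => ?_
          rw [Finset.mul_sum]
          exact Finset.sum_congr rfl fun a _ => by ring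
      _ = ∑ b, ∑ s1, π s₀ b * M.P s₀ b s1 * stateDist M π s1 (t + 1) s' := rfl

lemma bellman (M : MDP S A) {π : S → A → ℝ} (hπ : IsPolicy π) (s₀ : S) :
    V M π s₀ = ∑ a, π s₀ a * Q M π s₀ a := by
  have hsum : ∀ s1 : S,
      Summable (fun t => M.γ ^ t * ∑ s, stateDist M π s1 t s * ∑ a, π s a * M.r s a) :=
    fun s1 => summable_V M hπ s1
  have h0 : V M π s₀ = (∑ s, stateDist M π s₀ 0 s * ∑ a, π s a * M.r s a)
      + ∑' t : ℕ, M.γ ^ (t+1) * ∑ s, stateDist M π s₀ (t+1) s * ∑ a, π s a * M.r s a := by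
    rw [V, Summable.tsum_eq_zero_add (hsum s₀)]
    simp
  rw [h0]
  have hc0 : (∑ s, stateDist M π s₀ 0 s * ∑ a, π s a * M.r s a) = ∑ a, π s₀ a * M.r s₀ a := by
    simp [stateDist, Finset.sum_ite_eq']
  have hterm : ∀ t : ℕ, M.γ ^ (t+1) * ∑ s, stateDist M π s₀ (t+1) s * ∑ a, π s a * M.r s a
      = ∑ a, ∑ s1, π s₀ a * M.P s₀ a s1 *
          (M.γ * (M.γ ^ t * ∑ s, stateDist M π s1 t s * ∑ a', π s a' * M.r s a')) := by
    intro t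
    calc M.γ ^ (t+1) * ∑ s, stateDist M π s₀ (t+1) s * ∑ a', π s a' * M.r s a'
        = ∑ s, ∑ a, ∑ s1, M.γ ^ (t+1) *
            (π s₀ a * M.P s₀ a s1 * stateDist M π s1 t s * ∑ a', π s a' * M.r s a') := by
          rw [Finset.mul_sum]
          refine Finset.sum_congr rfl fun s _ => ?_
          rw [stateDist_succ, Finset.sum_mul, Finset.mul_sum]
          refine Finset.sum_congr rfl fun a _ => ?_
          rw [Finset.sum_mul, Finset.mul_sum]
      _ = ∑ a, ∑ s1, ∑ s, M.γ ^ (t+1) *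
            (π s₀ a * M.P s₀ a s1 * stateDist M π s1 t s * ∑ a', π s a' * M.r s a') :=
          sum_comm3 _
      _ = ∑ a, ∑ s1, π s₀ a * M.P s₀ a s1 *
            (M.γ * (M.γ ^ t * ∑ s, stateDist M π s1 t s * ∑ a', π s a' * M.r s a')) := by
          refine Finset.sum_congr rfl fun a _ => Finset.sum_congr rfl fun s1 _ => ?_
          rw [Finset.mul_sum, Finset.mul_sum, Finset.mul_sum]
          refine Finset.sum_congr rfl fun s _ => ?_
          rw [pow_succ]
          ring
  have htail : (∑' t : ℕ, M.γ ^ (t+1) * ∑ s, stateDist M π s₀ (t+1) s * ∑ a, π s a * M.r s a)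
      = ∑ a, ∑ s1, π s₀ a * M.P s₀ a s1 * (M.γ * V M π s1) := by
    simp only [hterm]
    rw [Summable.tsum_finsetSum (fun a _ => summable_sum fun s1 _ =>
      (((hsum s1).mul_left M.γ).mul_left _))]
    refine Finset.sum_congr rfl fun a _ => ?_
    rw [Summable.tsum_finsetSum (fun s1 _ => (((hsum s1).mul_left M.γ).mul_left _))]
    refine Finset.sum_congr rfl fun s1 _ => ?_
    rw [tsum_mul_left, tsum_mul_left, V]
  rw [htail, hc0]
  simp only [Q, Finset.mul_sum]
  rw [← Finset.sum_add_distrib]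
  refine Finset.sum_congr rfl fun a _ => ?_
  rw [mul_add, Finset.mul_sum]
  congr 1
  exact Finset.sum_congr rfl fun s1 _ => by ring

lemma KL_self {A : Type} [Fintype A] (p : A → ℝ) : KL p p = 0 := by
  unfold KL
  refine Finset.sum_eq_zero fun a _ => ?_
  by_cases h : p a = 0
  · simp [h]
  · rw [div_self h, Real.log_one, mul_zero]

/-- Per-state guarantee of approximate KL-regularized policy improvement, advantage form. -/
theorem kl_regularized_improvement_advantage
    {S A : Type} [Fintype S] [Fintype A] [Nonempty S] [Nonempty A] [DecidableEq S]
    (M : MDP S A) (π π' : S → A → ℝ)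
    (hπ : IsPolicy π) (hπ' : IsPolicy π')
    (hac : ∀ s : S, AbsCont (π s) (π' s))
    (Qhat : S → A → ℝ) (εQ : ℝ) (hεQ : 0 ≤ εQ)
    (hQ : ∀ s a, |Qhat s a - Q M π s a| ≤ εQ)
    (β : ℝ) (hβ : 0 < β)
    (s : S) (δs : ℝ) (hδs : 0 ≤ δs)
    (hopt : ∀ μ : A → ℝ, IsProb μ → AbsCont (π s) μ →
      ((∑ a, μ a * Qhat s a) - β * KL (π s) μ) - δs ≤
        (∑ a, π' s a * Qhat s a) - β * KL (π s) (π' s)) :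
    β * KL (π s) (π' s) - δs - 2 * εQ ≤ ∑ a, π' s a * Adv M π s a := by
  have herr : ∀ μ : A → ℝ, IsProb μ → |∑ a, μ a * Qhat s a - ∑ a, μ a * Q M π s a| ≤ εQ := by
    intro μ hμ
    rw [← Finset.sum_sub_distrib]
    calc |∑ a, (μ a * Qhat s a - μ a * Q M π s a)|
        ≤ ∑ a, |μ a * Qhat s a - μ a * Q M π s a| := Finset.abs_sum_le_sum_abs _ _
      _ = ∑ a, μ a * |Qhat s a - Q M π s a| := by
          refine Finset.sum_congr rfl fun a _ => ?_
          rw [← mul_sub, abs_mul, abs_of_nonneg (hμ.1 a)]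
      _ ≤ ∑ a, μ a * εQ := Finset.sum_le_sum fun a _ =>
          mul_le_mul_of_nonneg_left (hQ s a) (hμ.1 a)
      _ = εQ := by rw [← Finset.sum_mul, hμ.2, one_mul]
  have hμ := hopt (π s) (hπ s) (fun a h => h)
  rw [KL_self] at hμ
  have hV : V M π s = ∑ a, π s a * Q M π s a := bellman M hπ s
  have hAdv : ∑ a, π' s a * Adv M π s a = (∑ a, π' s a * Q M π s a) - V M π s := by
    simp only [Adv, mul_sub]
    rw [Finset.sum_sub_distrib, ← Finset.sum_mul, (hπ' s).2, one_mul]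
  have h1 := abs_le.mp (herr (π' s) (hπ' s))
  have h2 := abs_le.mp (herr (π s) (hπ s))
  rw [hAdv, hV]
  linarith [h1.1, h1.2, h2.1, h2.2, hμ]
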